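/- Let d ≥ 2 and let S₁, …, S_d ⊆ ℝ be finite sets with 0 ∈ S_i and |S_i| = n_i for each i. Let k ≥ 2 be an integer, and suppose n₁ ≥ cov_{k−1}(Γ(S₂, …, S_d)) + 1, where Γ(S₂,…,S_d) = S₂ × ⋯ × S_d ⊆ ℝ^{d−1}. Then cov_k(Γ(S₁, …, S_d)) ≤ Σ_{i=1}^{d} (n_i − 1) + (k−1)(n₁ − 1), i.e., there is a k-cover of Γ(S₁,…,S_d) = S₁ × ⋯ × S_d ⊆ ℝ^d by at most Σ_{i=1}^{d} (n_i − 1) + (k−1)(n₁ − 1) hyperplanes. -/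

import Mathlib

open scoped Classical

/-- An affine hyperplane in `ℝ^d`, given by `∑ i, a i * x i = c` with `a ≠ 0`. -/
structure Hyperplane (d : ℕ) where
  a : Fin d → ℝ
  c : ℝ
  nondeg : a ≠ 0

/-- Membership of a point on a hyperplane. -/
def Hyperplane.Mem {d : ℕ} (h : Hyperplane d) (p : Fin d → ℝ) : Prop :=
  ∑ i, h.a i * p i = h.c

/-- `L` is a `k`-cover of `Γ ⊆ ℝ^d`: a multiset of hyperplanes, none through the origin,
such that every point of `Γ` other than the origin lies on at least `k` of them
(counted with multiplicity). -/
def IsKCoverH {d : ℕ} (Γ : Set (Fin d → ℝ)) (k : ℕ) (L : Multiset (Hyperplane d)) : Prop :=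
  (∀ h ∈ L, ¬ h.Mem 0) ∧
    ∀ p ∈ Γ, p ≠ 0 → k ≤ (L.filter (fun h => h.Mem p)).card

/-- The minimum cardinality of a `k`-cover of `Γ ⊆ ℝ^d`. -/
noncomputable def covH {d : ℕ} (Γ : Set (Fin d → ℝ)) (k : ℕ) : ℕ :=
  sInf {m | ∃ L : Multiset (Hyperplane d), IsKCoverH Γ k L ∧ Multiset.card L = m}

/-- The grid `S 0 × S 1 × ⋯ × S (d-1) ⊆ ℝ^d`. -/
def gridOf {d : ℕ} (S : Fin d → Finset ℝ) : Set (Fin d → ℝ) :=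
  {p | ∀ i, p i ∈ S i}

-- axis hyperplane x_i = s
noncomputable def axisHyp {D : ℕ} (i : Fin D) (s : ℝ) : Hyperplane D :=
  ⟨Pi.single i 1, s, by
    intro h
    have := congrFun h i
    simp at this⟩

lemma axisHyp_mem {D : ℕ} (i : Fin D) (s : ℝ) (p : Fin D → ℝ) :
    (axisHyp i s).Mem p ↔ p i = s := by
  unfold Hyperplane.Mem axisHyp
  simp [Pi.single_apply, ite_mul]

-- tilted hyperplane
noncomputable def tiltHyp {D : ℕ} (h : Hyperplane D) (s : ℝ) : Hyperplane (D + 1) :=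
  ⟨Fin.cons (h.c / s) h.a, h.c, by
    intro hc
    apply h.nondeg
    funext j
    have := congrFun hc j.succ
    simpa using this⟩

lemma tiltHyp_mem {D : ℕ} (h : Hyperplane D) (s : ℝ) (p : Fin (D + 1) → ℝ) :
    (tiltHyp h s).Mem p ↔ h.c / s * p 0 + ∑ i, h.a i * p i.succ = h.c := by
  unfold Hyperplane.Mem tiltHyp
  rw [Fin.sum_univ_succ]
  simp

-- filter of nsmul
lemma filter_nsmul {α : Type*} (p : α → Prop) [DecidablePred p] (n : ℕ) (M : Multiset α) :
    Multiset.filter p (n • M) = n • Multiset.filter p M := by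
  induction n with
  | zero => simp
  | succ n ih => simp [succ_nsmul, Multiset.filter_add, ih]

lemma card_finset_sum {ι α : Type*} (s : Finset ι) (f : ι → Multiset α) :
    Multiset.card (∑ i ∈ s, f i) = ∑ i ∈ s, Multiset.card (f i) := by
  classical
  induction s using Finset.cons_induction with
  | empty => simp
  | cons a s ha ih => simp [Finset.sum_cons, ih]

-- the axis cover
noncomputable def axisCover {D : ℕ} (S : Fin D → Finset ℝ) : Multiset (Hyperplane D) :=
  ∑ i, ((S i).erase 0).val.map (fun s => axisHyp i s)

lemma axisCover_card {D : ℕ} (S : Fin D → Finset ℝ) (h0 : ∀ i, (0:ℝ) ∈ S i) :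
    Multiset.card (axisCover S) = ∑ i, ((S i).card - 1) := by
  unfold axisCover
  rw [card_finset_sum]
  refine Finset.sum_congr rfl fun i _ => ?_
  rw [Multiset.card_map]
  exact Finset.card_erase_of_mem (h0 i)

lemma axisCover_not_origin {D : ℕ} (S : Fin D → Finset ℝ) :
    ∀ h ∈ axisCover S, ¬ h.Mem 0 := by
  intro h hmem
  unfold axisCover at hmem
  rw [Multiset.mem_sum] at hmem
  obtain ⟨i, -, hi⟩ := hmem
  rw [Multiset.mem_map] at hi
  obtain ⟨s, hs, rfl⟩ := hi
  rw [axisHyp_mem]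
  have : s ≠ 0 := Finset.ne_of_mem_erase hs
  simpa using this.symm

lemma axisCover_covers {D : ℕ} (S : Fin D → Finset ℝ) (p : Fin D → ℝ)
    (hp : p ∈ gridOf S) (hp0 : p ≠ 0) :
    1 ≤ Multiset.card ((axisCover S).filter (fun h => h.Mem p)) := by
  have : ∃ i, p i ≠ 0 := by
    by_contra hc
    push_neg at hc
    exact hp0 (funext hc)
  obtain ⟨i, hi⟩ := this
  have hmem : axisHyp i (p i) ∈ axisCover S := by
    unfold axisCover
    rw [Multiset.mem_sum]
    exact ⟨i, Finset.mem_univ i, Multiset.mem_map.2 ⟨p i,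
      Finset.mem_val.mpr (Finset.mem_erase.2 ⟨hi, hp i⟩), rfl⟩⟩
  have : axisHyp i (p i) ∈ (axisCover S).filter (fun h => h.Mem p) :=
    Multiset.mem_filter.2 ⟨hmem, (axisHyp_mem i (p i) p).2 rfl⟩
  exact Multiset.card_pos_iff_exists_mem.2 ⟨_, this⟩

lemma exists_cover {D : ℕ} (S : Fin D → Finset ℝ) (k : ℕ) :
    ∃ L : Multiset (Hyperplane D), IsKCoverH (gridOf S) k L := by
  refine ⟨k • axisCover S, ?_, ?_⟩
  · intro h hmem
    rw [Multiset.mem_nsmul] at hmem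
    exact axisCover_not_origin S h hmem.2
  · intro p hp hp0
    rw [filter_nsmul, Multiset.card_nsmul]
    calc k = k * 1 := (mul_one k).symm
    _ ≤ _ := Nat.mul_le_mul_left k (axisCover_covers S p hp hp0)

lemma exists_mem_zipWith {α β γ : Type*} (f : α → β → γ) (b : β) :
    ∀ (t : List β) (l : List α), t.length ≤ l.length → b ∈ t →
      ∃ a ∈ l, f a b ∈ List.zipWith f l t := by
  intro t
  induction t with
  | nil => intro l _ hb; simp at hb
  | cons b' t ih =>
    intro l hlen hb
    cases l with
    | nil => simp at hlen
    | cons a l =>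
      rw [List.zipWith_cons_cons]
      rcases List.mem_cons.1 hb with rfl | hb'
      · exact ⟨a, List.mem_cons_self, List.mem_cons_self⟩
      · obtain ⟨a', ha', hz⟩ := ih l (by simpa using hlen) hb'
        exact ⟨a', List.mem_cons_of_mem _ ha', List.mem_cons_of_mem _ hz⟩

lemma mem_zipWith' {α β γ : Type*} (f : α → β → γ) (c : γ) :
    ∀ (l : List α) (t : List β), c ∈ List.zipWith f l t →
      ∃ a ∈ l, ∃ b ∈ t, c = f a b := by
  intro l
  induction l with
  | nil => intro t hc; simp at hc
  | cons a l ih =>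
    intro t hc
    cases t with
    | nil => simp at hc
    | cons b t =>
      rw [List.zipWith_cons_cons, List.mem_cons] at hc
      rcases hc with rfl | hc
      · exact ⟨a, List.mem_cons_self, b, List.mem_cons_self, rfl⟩
      · obtain ⟨a', ha', b', hb', rfl⟩ := ih t hc
        exact ⟨a', List.mem_cons_of_mem _ ha', b', List.mem_cons_of_mem _ hb', rfl⟩

lemma card_filter_zipWith {α β γ : Type*} (f : α → β → γ) (q : γ → Prop) (r : α → Prop)
    [DecidablePred q] [DecidablePred r] :
    ∀ (l : List α) (t : List β), l.length = t.length →
    (∀ a ∈ l, ∀ b ∈ t, (q (f a b) ↔ r a)) →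
    Multiset.card (Multiset.filter q ↑(List.zipWith f l t)) =
      Multiset.card (Multiset.filter r (↑l : Multiset α)) := by
  intro l
  induction l with
  | nil => intro t _ _; simp
  | cons a l ih =>
    intro t ht hq
    cases t with
    | nil => simp at ht
    | cons b t =>
      rw [List.zipWith_cons_cons]
      rw [← Multiset.cons_coe, ← Multiset.cons_coe, Multiset.filter_cons, Multiset.filter_cons]
      rw [Multiset.card_add, Multiset.card_add]
      have hr : q (f a b) ↔ r a :=
        hq a (List.mem_cons_self) b (List.mem_cons_self)
      have hih := ih t (by simpa using ht)
        (fun a' ha' b' hb' => hq a' (List.mem_cons_of_mem _ ha') b' (List.mem_cons_of_mem _ hb'))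
      by_cases h : r a
      · rw [if_pos (hr.2 h), if_pos h]
        simpa using hih
      · rw [if_neg (fun hq' => h (hr.1 hq')), if_neg h]
        simpa using hih

lemma filter_card_pos {α : Type*} (p : α → Prop) [DecidablePred p] (M : Multiset α)
    (x : α) (hx : x ∈ M) (hpx : p x) : 1 ≤ Multiset.card (M.filter p) :=
  Multiset.card_pos_iff_exists_mem.2 ⟨x, Multiset.mem_filter.2 ⟨hx, hpx⟩⟩

theorem stmt19 (d : ℕ) (hd : 1 ≤ d) (S : Fin (d + 1) → Finset ℝ)
    (h0 : ∀ i, (0 : ℝ) ∈ S i) (n : Fin (d + 1) → ℕ) (hn : ∀ i, (S i).card = n i)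
    (k : ℕ) (hk : 2 ≤ k)
    (hbig : covH (gridOf (fun i : Fin d => S i.succ)) (k - 1) + 1 ≤ n 0) :
    (∃ L : Multiset (Hyperplane (d + 1)), IsKCoverH (gridOf S) k L ∧
        Multiset.card L ≤ (∑ i, (n i - 1)) + (k - 1) * (n 0 - 1)) ∧
      covH (gridOf S) k ≤ (∑ i, (n i - 1)) + (k - 1) * (n 0 - 1) := by
  have hne : {mm | ∃ L : Multiset (Hyperplane d),
      IsKCoverH (gridOf (fun i : Fin d => S i.succ)) (k - 1) L ∧
      Multiset.card L = mm}.Nonempty := by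
    obtain ⟨L, hL⟩ := exists_cover (fun i : Fin d => S i.succ) (k - 1)
    exact ⟨_, L, hL, rfl⟩
  set m := covH (gridOf (fun i : Fin d => S i.succ)) (k - 1) with hm
  obtain ⟨L', hL', hcardL'⟩ : ∃ L' : Multiset (Hyperplane d),
      IsKCoverH (gridOf (fun i : Fin d => S i.succ)) (k - 1) L' ∧ Multiset.card L' = m :=
    Nat.sInf_mem hne
  have hn0 : 1 ≤ n 0 := by
    rw [← hn 0]; exact Finset.card_pos.2 ⟨0, h0 0⟩
  have hcard_erase : ((S 0).erase 0).card = n 0 - 1 := by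
    rw [Finset.card_erase_of_mem (h0 0), hn 0]
  have hmle : m ≤ n 0 - 1 := by omega
  obtain ⟨T, hTsub, hTcard⟩ : ∃ T ⊆ (S 0).erase 0, T.card = m :=
    Finset.exists_subset_card_eq (by omega)
  set t : List ℝ := T.toList with ht
  set l : List (Hyperplane d) := L'.toList with hl
  have hlt : l.length = t.length := by
    rw [hl, ht, Multiset.length_toList, Finset.length_toList, hcardL', hTcard]
  have hltm : l.length = m := by rw [hl, Multiset.length_toList, hcardL']
  set Mt : Multiset (Hyperplane (d + 1)) := ↑(List.zipWith tiltHyp l t) with hMt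
  set M0 : Multiset (Hyperplane (d + 1)) :=
    ((S 0).erase 0).val.map (fun s => axisHyp (0 : Fin (d + 1)) s) with hM0
  set M0' : Multiset (Hyperplane (d + 1)) :=
    (((S 0).erase 0) \ T).val.map (fun s => axisHyp (0 : Fin (d + 1)) s) with hM0'
  set Mrest : Multiset (Hyperplane (d + 1)) :=
    ∑ i : Fin d, ((S i.succ).erase 0).val.map (fun s => axisHyp (i.succ : Fin (d + 1)) s)
    with hMrest
  set L : Multiset (Hyperplane (d + 1)) := (k - 1) • M0 + Mt + M0' + Mrest with hLdef
  -- cardinality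
  have hcM0 : Multiset.card M0 = n 0 - 1 := by
    rw [hM0, Multiset.card_map]; exact hcard_erase
  have hcMt : Multiset.card Mt = m := by
    rw [hMt, Multiset.coe_card, List.length_zipWith, ← hlt, min_self, hltm]
  have hcM0' : Multiset.card M0' = n 0 - 1 - m := by
    rw [hM0', Multiset.card_map]
    show ((S 0).erase 0 \ T).card = n 0 - 1 - m
    rw [Finset.card_sdiff_of_subset hTsub, hcard_erase, hTcard]
  have hcMrest : Multiset.card Mrest = ∑ i : Fin d, (n i.succ - 1) := by
    rw [hMrest, card_finset_sum]
    refine Finset.sum_congr rfl fun i _ => ?_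
    rw [Multiset.card_map]
    show ((S i.succ).erase 0).card = n i.succ - 1
    rw [Finset.card_erase_of_mem (h0 i.succ), hn i.succ]
  have hsum : (∑ i, (n i - 1)) = (n 0 - 1) + ∑ i : Fin d, (n i.succ - 1) :=
    Fin.sum_univ_succ _
  have hcL : Multiset.card L = (∑ i, (n i - 1)) + (k - 1) * (n 0 - 1) := by
    rw [hLdef, Multiset.card_add, Multiset.card_add, Multiset.card_add,
      Multiset.card_nsmul, hcM0, hcMt, hcM0', hcMrest, hsum]
    omega
  -- no hyperplane through origin
  have haxis0 : ∀ (i : Fin (d + 1)) (s : ℝ), s ≠ 0 → ¬ (axisHyp i s).Mem (0 : Fin (d+1) → ℝ) := by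
    intro i s hs hmem0
    rw [axisHyp_mem] at hmem0
    exact hs (by simpa using hmem0.symm)
  have horigin : ∀ h ∈ L, ¬ h.Mem 0 := by
    intro h hmem
    rw [hLdef] at hmem
    simp only [Multiset.mem_add] at hmem
    rcases hmem with ((h1 | h2) | h3) | h4
    · rw [Multiset.mem_nsmul] at h1
      obtain ⟨s, hs, rfl⟩ := Multiset.mem_map.1 h1.2
      exact haxis0 _ _ (Finset.ne_of_mem_erase (Finset.mem_val.mp hs))
    · rw [hMt, Multiset.mem_coe] at h2
      obtain ⟨a, ha, b, hb, rfl⟩ := mem_zipWith' tiltHyp h l t h2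
      have haL : a ∈ L' := by
        rw [hl] at ha; exact (Multiset.mem_toList).1 ha
      have hc0 : a.c ≠ 0 := by
        intro hc
        apply hL'.1 a haL
        show ∑ i, a.a i * (0 : Fin d → ℝ) i = a.c
        simp [hc]
      rw [tiltHyp_mem]
      simpa using fun hcc => hc0 hcc.symm
    · obtain ⟨s, hs, rfl⟩ := Multiset.mem_map.1 h3
      have : s ∈ (S 0).erase 0 := (Finset.mem_sdiff.1 (Finset.mem_val.mp hs)).1
      exact haxis0 _ _ (Finset.ne_of_mem_erase this)
    · rw [hMrest, Multiset.mem_sum] at h4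
      obtain ⟨i, -, hi⟩ := h4
      obtain ⟨s, hs, rfl⟩ := Multiset.mem_map.1 hi
      exact haxis0 _ _ (Finset.ne_of_mem_erase (Finset.mem_val.mp hs))
  -- coverage
  have hcover : ∀ p ∈ gridOf S, p ≠ 0 →
      k ≤ Multiset.card (L.filter (fun h => h.Mem p)) := by
    intro p hp hp0
    have hfilter : Multiset.card (L.filter (fun h => h.Mem p)) =
        (k - 1) * Multiset.card (M0.filter (fun h => h.Mem p)) +
        Multiset.card (Mt.filter (fun h => h.Mem p)) +
        Multiset.card (M0'.filter (fun h => h.Mem p)) +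
        Multiset.card (Mrest.filter (fun h => h.Mem p)) := by
      rw [hLdef, Multiset.filter_add, Multiset.filter_add, Multiset.filter_add,
        Multiset.card_add, Multiset.card_add, Multiset.card_add, filter_nsmul,
        Multiset.card_nsmul]
    rw [hfilter]
    have hrest : Fin.tail p ≠ 0 →
        1 ≤ Multiset.card (Mrest.filter (fun h => h.Mem p)) := by
      intro htail
      have hex : ∃ i : Fin d, p i.succ ≠ 0 := by
        by_contra hcn
        push_neg at hcn
        exact htail (funext fun i => hcn i)
      obtain ⟨i, hi⟩ := hex
      refine filter_card_pos _ Mrest (axisHyp i.succ (p i.succ)) ?_ ?_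
      · rw [hMrest, Multiset.mem_sum]
        exact ⟨i, Finset.mem_univ i, Multiset.mem_map.2
          ⟨p i.succ, Finset.mem_val.mpr (Finset.mem_erase.2 ⟨hi, hp i.succ⟩), rfl⟩⟩
      · exact (axisHyp_mem _ _ _).2 rfl
    by_cases hp00 : p 0 = 0
    · -- slice case
      have htail : Fin.tail p ≠ 0 := by
        intro hT0
        apply hp0
        funext j
        cases j using Fin.cases with
        | zero => exact hp00
        | succ i => exact congrFun hT0 i
      have htailgrid : Fin.tail p ∈ gridOf (fun i : Fin d => S i.succ) := fun i => hp i.succ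
      have hct : k - 1 ≤ Multiset.card (Mt.filter (fun h => h.Mem p)) := by
        have heq : Multiset.card (Mt.filter (fun h => h.Mem p)) =
            Multiset.card (L'.filter (fun h => h.Mem (Fin.tail p))) := by
          rw [hMt, ← Multiset.coe_toList L', ← hl]
          refine card_filter_zipWith tiltHyp _ _ l t hlt ?_
          intro a _ b _
          rw [tiltHyp_mem]
          show _ ↔ ∑ i, a.a i * Fin.tail p i = a.c
          simp [hp00, Fin.tail]
        rw [heq]
        exact hL'.2 (Fin.tail p) htailgrid htail
      have hr := hrest htail
      omega
    · -- p 0 ≠ 0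
      have hp0S : p 0 ∈ (S 0).erase 0 := Finset.mem_erase.2 ⟨hp00, hp 0⟩
      have hc0 : 1 ≤ Multiset.card (M0.filter (fun h => h.Mem p)) := by
        refine filter_card_pos _ M0 (axisHyp 0 (p 0)) ?_ ((axisHyp_mem _ _ _).2 rfl)
        rw [hM0]
        exact Multiset.mem_map.2 ⟨p 0, Finset.mem_val.mpr hp0S, rfl⟩
      have hmul : k - 1 ≤ (k - 1) * Multiset.card (M0.filter (fun h => h.Mem p)) :=
        Nat.le_mul_of_pos_right _ (by omega)
      by_cases hT : p 0 ∈ T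
      · by_cases htail : Fin.tail p = 0
        · have hmemt : p 0 ∈ t := by rw [ht]; exact Finset.mem_toList.2 hT
          obtain ⟨a, ha, hz⟩ := exists_mem_zipWith tiltHyp (p 0) t l hlt.ge hmemt
          have hqa : (tiltHyp a (p 0)).Mem p := by
            rw [tiltHyp_mem]
            have hzero : ∀ i : Fin d, p i.succ = 0 := fun i => congrFun htail i
            rw [div_mul_cancel₀ _ hp00]
            simp [hzero]
          have hct1 : 1 ≤ Multiset.card (Mt.filter (fun h => h.Mem p)) := by
            refine filter_card_pos _ Mt (tiltHyp a (p 0)) ?_ hqa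
            rw [hMt]
            exact Multiset.mem_coe.2 hz
          omega
        · have hr := hrest htail
          omega
      · have hc0' : 1 ≤ Multiset.card (M0'.filter (fun h => h.Mem p)) := by
          refine filter_card_pos _ M0' (axisHyp 0 (p 0)) ?_ ((axisHyp_mem _ _ _).2 rfl)
          rw [hM0']
          exact Multiset.mem_map.2 ⟨p 0, Finset.mem_val.mpr (Finset.mem_sdiff.2 ⟨hp0S, hT⟩), rfl⟩
        omega
  have hIsCover : IsKCoverH (gridOf S) k L := ⟨horigin, hcover⟩
  refine ⟨⟨L, hIsCover, le_of_eq hcL⟩, ?_⟩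
  exact le_trans (Nat.sInf_le ⟨L, hIsCover, rfl⟩) (le_of_eq hcL)
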